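/- arXiv:2501.03359 — 2 statements merged into one kernel-verified Lean document; each statement's English description precedes it below -/
import Mathlib

section
/- For every integer d ≥ 2 and real α > 0, the infinite cluster 𝒳_∞ is almost surely a bounded subset of ℝ^d; equivalently, ρ(𝒳_∞) < ∞ almost surely, and hence the convex hull of 𝒳_∞ is almost surely bounded. -/
open scoped ENNReal NNReal

/-- Index type for the jointly independent random choices: `inl i` indexes the
uniform parent choice of vertex `i`, `inr (i, k)` indexes the `k`-th coordinate
of the Gaussian displacement `D i`. -/
abbrev Idx (d : ℕ) := ℕ ⊕ (ℕ × Fin d)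

/-- Value type of each random choice. -/
def IdxType (d : ℕ) : Idx d → Type
  | .inl _ => ℕ
  | .inr _ => ℝ

instance instIdxType (d : ℕ) (x : Idx d) : MeasurableSpace (IdxType d x) := by
  cases x with
  | inl _ => exact (inferInstance : MeasurableSpace ℕ)
  | inr _ => exact (inferInstance : MeasurableSpace ℝ)

/-- The random cluster model in `ℝ^d` with standard deviations `σ_i = i^{-α}`:
`X 1 = 0`, and for `i ≥ 2`, `X i = X (pa i) + D i` where the parent `pa i` is
uniform on `{1, …, i-1}` and `D i` has `d` independent centered Gaussian
coordinates of variance `i^{-2α}`, all choices jointly independent.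
`lvl i` is the level of vertex `i` in the recursive tree. -/
structure Model (d : ℕ) (α : ℝ) where
  Ω : Type
  [mΩ : MeasurableSpace Ω]
  μ : MeasureTheory.Measure Ω
  prob : MeasureTheory.IsProbabilityMeasure μ
  pa : ℕ → Ω → ℕ
  D : ℕ → Ω → EuclideanSpace ℝ (Fin d)
  X : ℕ → Ω → EuclideanSpace ℝ (Fin d)
  lvl : ℕ → Ω → ℕ
  meas_pa : ∀ i, Measurable (pa i)
  meas_D : ∀ i, Measurable (D i)
  pa_mem : ∀ i, 2 ≤ i → ∀ ω, 1 ≤ pa i ω ∧ pa i ω < i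
  pa_unif : ∀ i, 2 ≤ i → ∀ j, 1 ≤ j → j < i → μ {ω | pa i ω = j} = (1 : ℝ≥0∞) / (i - 1 : ℕ)
  D_gauss : ∀ i, 2 ≤ i → ∀ k : Fin d,
    MeasureTheory.Measure.map (fun ω => D i ω k) μ
      = ProbabilityTheory.gaussianReal 0 ((i : ℝ≥0) ^ (-(2 * α)))
  indep : ProbabilityTheory.iIndepFun (β := IdxType d) (m := instIdxType d)
    (fun x : Idx d => match x with
      | .inl i => pa i
      | .inr (i, k) => fun ω => D i ω k) μ
  X_one : ∀ ω, X 1 ω = 0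
  X_rec : ∀ i, 2 ≤ i → ∀ ω, X i ω = X (pa i ω) ω + D i ω
  lvl_one : ∀ ω, lvl 1 ω = 0
  lvl_rec : ∀ i, 2 ≤ i → ∀ ω, lvl i ω = lvl (pa i ω) ω + 1

open MeasureTheory ProbabilityTheory Real Filter Bornology

/-!
By Borel–Cantelli it suffices that, for vertex `j`, two bad events have summable probabilities.
A coordinate of the Gaussian step `D j` exceeds `j^(-α/2)` with probability at most
`2 exp(-j^α/2)`. The level satisfies `E[2^(lvl j)] = (2/(j-1)) ∑_{u<j} E[2^(lvl u)]`, whence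
`E[2^(lvl j)] ≤ j`, and Markov gives `P(2^(lvl j) > j^3) ≤ j^(-2)`. Hence almost surely, for all
large `j`, `‖D j‖ ≤ √d j^(-α/2) ≤ √d ρ^(lvl j)` with `ρ = 2^(-α/6) < 1`. Levels increase by one
along each ancestral line, so the steps taken there after finitely many vertices add up to at
most `√d ∑ ρ^t < ∞`.
-/

lemma summable_exp_neg_mul_rpow_natCast {α c : ℝ} (hα : 0 < α) (hc : 0 < c) :
    Summable fun n : ℕ => exp (-c * (n : ℝ) ^ α) := by
  have hO : (fun n : ℕ => exp (-c * (n : ℝ) ^ α)) =O[atTop]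
      fun n : ℕ => ((n : ℝ) ^ α) ^ (-(2 / α)) :=
    (isLittleO_exp_neg_mul_rpow_atTop hc _).isBigO.comp_tendsto
      ((tendsto_rpow_atTop hα).comp tendsto_natCast_atTop_atTop)
  refine summable_of_isBigO_nat ?_ hO
  refine (Real.summable_nat_rpow.mpr (by norm_num : (-2 : ℝ) < -1)).congr fun n => ?_
  rw [← Real.rpow_mul n.cast_nonneg]
  congr 1
  field_simp

lemma EuclideanSpace.norm_le_sqrt_card_mul {ι : Type*} [Fintype ι] {x : EuclideanSpace ℝ ι}
    {c : ℝ} (hc : 0 ≤ c) (h : ∀ i, |x i| ≤ c) : ‖x‖ ≤ √(Fintype.card ι) * c := by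
  rw [EuclideanSpace.norm_eq, ← Real.sqrt_sq hc, ← Real.sqrt_mul (Nat.cast_nonneg _)]
  gcongr
  calc ∑ i, ‖x i‖ ^ 2 ≤ ∑ _i : ι, c ^ 2 :=
        Finset.sum_le_sum fun i _ => pow_le_pow_left₀ (norm_nonneg _) (h i) 2
    _ = Fintype.card ι * c ^ 2 := by simp

section Subgaussian

variable {Ω : Type*} [MeasurableSpace Ω] {μ : Measure Ω}

lemma hasSubgaussianMGF_of_map_eq_gaussianReal [IsProbabilityMeasure μ] {X : Ω → ℝ} {v : ℝ≥0}
    (hX : μ.map X = gaussianReal 0 v) : HasSubgaussianMGF X v μ where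
  integrable_exp_mul t := mgf_pos_iff.mp (by rw [mgf_gaussianReal hX]; exact exp_pos _)
  mgf_le t := by rw [mgf_gaussianReal hX, zero_mul, zero_add]

lemma ProbabilityTheory.HasSubgaussianMGF.measureReal_le_abs_le {X : Ω → ℝ} {c : ℝ≥0}
    (h : HasSubgaussianMGF X c μ) {ε : ℝ} (hε : 0 ≤ ε) :
    μ.real {ω | ε ≤ |X ω|} ≤ 2 * exp (-ε ^ 2 / (2 * c)) := by
  have hsplit : {ω | ε ≤ |X ω|} = {ω | ε ≤ X ω} ∪ {ω | ε ≤ (-X) ω} := by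
    ext ω
    simp [le_abs', le_neg, or_comm]
  rw [hsplit]
  linarith [measureReal_union_le (μ := μ) {ω | ε ≤ X ω} {ω | ε ≤ (-X) ω},
    h.measure_ge_le hε, h.neg.measure_ge_le hε]

end Subgaussian

lemma le_add_sum_range_of_le_parent {pa lvl : ℕ → ℕ} {x g : ℕ → ℝ} {J : ℕ} {B : ℝ}
    (hg : ∀ t, 0 ≤ g t) (hpa : ∀ i, J ≤ i → pa i < i)
    (hlvl : ∀ i, J ≤ i → lvl i = lvl (pa i) + 1)
    (hx : ∀ i, J ≤ i → x i ≤ x (pa i) + g (lvl i)) (hB : ∀ i < J, x i ≤ B) (i : ℕ) :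
    x i ≤ B + ∑ t ∈ Finset.range (lvl i + 1), g t := by
  induction i using Nat.strong_induction_on with
  | _ i ih =>
    by_cases hi : i < J
    · linarith [hB i hi, Finset.sum_nonneg fun t (_ : t ∈ Finset.range (lvl i + 1)) => hg t]
    · have hJi : J ≤ i := not_lt.mp hi
      have hparent := ih (pa i) (hpa i hJi)
      rw [← hlvl i hJi] at hparent
      rw [Finset.sum_range_succ]
      linarith [hx i hJi]

namespace Model

variable {d : ℕ} {α : ℝ} (M : Model d α)

instance : MeasurableSpace M.Ω := M.mΩ

instance : IsProbabilityMeasure M.μ := M.prob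

/-- The parent choices of the vertices `2, …, n`: they determine the levels up to `n` and are
independent of `pa j` for `j > n`. -/
abbrev treeσ (n : ℕ) : MeasurableSpace M.Ω :=
  ⨆ r ∈ Set.Icc 2 n, MeasurableSpace.comap (M.pa r) inferInstance

lemma treeσ_mono : Monotone M.treeσ :=
  fun _ _ hmn => biSup_mono fun _ hr => ⟨hr.1, hr.2.trans hmn⟩

lemma treeσ_le (n : ℕ) : M.treeσ n ≤ M.mΩ :=
  iSup₂_le fun r _ => (M.meas_pa r).comap_le

lemma comap_pa_le_treeσ {r n : ℕ} (h2r : 2 ≤ r) (hrn : r ≤ n) :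
    MeasurableSpace.comap (M.pa r) inferInstance ≤ M.treeσ n :=
  le_iSup₂ (f := fun r (_ : r ∈ Set.Icc 2 n) => MeasurableSpace.comap (M.pa r) inferInstance)
    r ⟨h2r, hrn⟩

lemma indep_comap_pa_treeσ {j n : ℕ} (hnj : n < j) :
    Indep (MeasurableSpace.comap (M.pa j) inferInstance) (M.treeσ n) M.μ := by
  have h := indep_iSup_of_disjoint
    (fun x => by
      rcases x with i | ⟨i, k⟩
      · exact (M.meas_pa i).comap_le
      · exact ((EuclideanSpace.proj k).continuous.measurable.comp (M.meas_D i)).comap_le)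
    ((iIndepFun_iff_iIndep _ _ _).mp M.indep)
    (S := {Sum.inl j}) (T := Sum.inl '' Set.Icc 2 n)
    (by
      rw [Set.disjoint_singleton_left]
      rintro ⟨r, hr, hrj⟩
      cases hrj
      exact absurd hr.2 (by omega))
  simp only [iSup_singleton, iSup_image] at h
  exact h

lemma setOf_lvl_eq_succ {j : ℕ} (hj : 2 ≤ j) (k : ℕ) :
    {ω | M.lvl j ω = k + 1} = ⋃ u ∈ Set.Ico 1 j, {ω | M.pa j ω = u} ∩ {ω | M.lvl u ω = k} := by
  ext ω
  simp only [Set.mem_ofPred_eq, Set.mem_iUnion, Set.mem_inter_iff, Set.mem_Ico, exists_prop,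
    M.lvl_rec j hj ω]
  exact ⟨fun h => ⟨_, M.pa_mem j hj ω, rfl, by omega⟩, fun ⟨u, _, hu, h⟩ => by rw [hu, h]⟩

lemma measurable_lvl_treeσ (n : ℕ) (hn : 1 ≤ n) : Measurable[M.treeσ n] (M.lvl n) := by
  induction n using Nat.strong_induction_on with
  | _ n ih =>
    rcases hn.eq_or_lt with rfl | hn2
    · rw [show M.lvl 1 = fun _ => 0 from funext M.lvl_one]
      exact @measurable_const ℕ M.Ω _ (M.treeσ 1) 0
    refine @measurable_to_countable' ℕ M.Ω _ _ (M.treeσ n) _ fun k => ?_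
    cases k with
    | zero =>
      convert @MeasurableSet.empty _ (M.treeσ n)
      ext ω
      simp [M.lvl_rec n hn2 ω]
    | succ k =>
      rw [show M.lvl n ⁻¹' {k + 1} = _ from M.setOf_lvl_eq_succ hn2 k]
      refine MeasurableSet.biUnion (Set.to_countable _) fun u hu => ?_
      exact (M.comap_pa_le_treeσ hn2 le_rfl _ ⟨{u}, measurableSet_singleton u, rfl⟩).inter
        (M.treeσ_mono hu.2.le _ (ih u hu.2 hu.1 (measurableSet_singleton k)))

lemma measurable_lvl {n : ℕ} (hn : 1 ≤ n) : Measurable (M.lvl n) :=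
  (M.measurable_lvl_treeσ n hn).mono (M.treeσ_le n) le_rfl

lemma measurable_two_pow_lvl {n : ℕ} (hn : 1 ≤ n) :
    Measurable fun ω => (2 : ℝ≥0∞) ^ M.lvl n ω :=
  (measurable_of_countable fun k : ℕ => (2 : ℝ≥0∞) ^ k).comp (M.measurable_lvl hn)

lemma lintegral_two_pow_lvl {j : ℕ} (hj : 2 ≤ j) :
    ∫⁻ ω, 2 ^ M.lvl j ω ∂M.μ
      = ∑ u ∈ Finset.Ico 1 j, M.μ {ω | M.pa j ω = u} * (2 * ∫⁻ ω, 2 ^ M.lvl u ω ∂M.μ) := by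
  have hpt : ∀ ω, (2 : ℝ≥0∞) ^ M.lvl j ω
      = ∑ u ∈ Finset.Ico 1 j, {ω | M.pa j ω = u}.indicator 1 ω * (2 * 2 ^ M.lvl u ω) := by
    intro ω
    rw [Finset.sum_eq_single_of_mem (M.pa j ω) (Finset.mem_Ico.2 (M.pa_mem j hj ω))]
    · simp [M.lvl_rec j hj ω, pow_succ, mul_comm]
    · intro u _ hu
      simp [Set.indicator, Ne.symm hu]
  simp_rw [hpt]
  rw [lintegral_finsetSum _ fun u hu => ?meas]
  case meas =>
    exact (measurable_const.indicator (M.meas_pa j (measurableSet_singleton u))).mul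
      ((M.measurable_two_pow_lvl (Finset.mem_Ico.1 hu).1).const_mul 2)
  refine Finset.sum_congr rfl fun u hu => ?_
  obtain ⟨hu1, huj⟩ := Finset.mem_Ico.1 hu
  have hf : Measurable[MeasurableSpace.comap (M.pa j) inferInstance]
      ({ω | M.pa j ω = u}.indicator (1 : M.Ω → ℝ≥0∞)) :=
    measurable_const.indicator ⟨{u}, measurableSet_singleton u, rfl⟩
  have hg : Measurable[M.treeσ (j - 1)] fun ω => (2 : ℝ≥0∞) * 2 ^ M.lvl u ω :=
    (measurable_of_countable fun k : ℕ => (2 : ℝ≥0∞) * 2 ^ k).comp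
      ((M.measurable_lvl_treeσ u hu1).mono (M.treeσ_mono (by omega)) le_rfl)
  rw [lintegral_mul_eq_lintegral_mul_lintegral_of_independent_measurableSpace
      (M.meas_pa j).comap_le (M.treeσ_le _) (M.indep_comap_pa_treeσ (by omega)) hf hg,
    lintegral_indicator_one (s := {ω | M.pa j ω = u}) (M.meas_pa j (measurableSet_singleton u)),
    lintegral_const_mul _ (M.measurable_two_pow_lvl hu1)]

lemma lintegral_two_pow_lvl_le (j : ℕ) (hj : 1 ≤ j) : ∫⁻ ω, 2 ^ M.lvl j ω ∂M.μ ≤ j := by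
  induction j using Nat.strong_induction_on with
  | _ j ih =>
    rcases hj.eq_or_lt with rfl | hj2
    · simp [M.lvl_one]
    have hj1 : ((j - 1 : ℕ) : ℝ≥0∞) ≠ 0 := by exact_mod_cast (by omega : j - 1 ≠ 0)
    have hgauss : (∑ u ∈ Finset.Ico 1 j, u) * 2 = j * (j - 1) := by
      rw [← Finset.sum_range_id_mul_two, Finset.range_eq_Ico,
        Finset.sum_eq_sum_Ico_succ_bot (by omega : 0 < j), zero_add]
    calc ∫⁻ ω, 2 ^ M.lvl j ω ∂M.μ
        = ∑ u ∈ Finset.Ico 1 j, M.μ {ω | M.pa j ω = u} * (2 * ∫⁻ ω, 2 ^ M.lvl u ω ∂M.μ) :=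
          M.lintegral_two_pow_lvl hj2
      _ ≤ ∑ u ∈ Finset.Ico 1 j, ((j - 1 : ℕ) : ℝ≥0∞)⁻¹ * (2 * u) := by
          gcongr with u hu
          · rw [M.pa_unif j hj2 u (Finset.mem_Ico.1 hu).1 (Finset.mem_Ico.1 hu).2, one_div]
          · exact ih u (Finset.mem_Ico.1 hu).2 (Finset.mem_Ico.1 hu).1
      _ = ((j - 1 : ℕ) : ℝ≥0∞)⁻¹ * (((∑ u ∈ Finset.Ico 1 j, u) * 2 : ℕ) : ℝ≥0∞) := by
          rw [Nat.cast_mul, Nat.cast_sum, Finset.sum_mul, Finset.mul_sum]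
          exact Finset.sum_congr rfl fun u _ => by push_cast; ring
      _ = j := by
          rw [hgauss, Nat.cast_mul, mul_comm, mul_assoc,
            ENNReal.mul_inv_cancel hj1 (ENNReal.natCast_ne_top _), mul_one]

lemma measure_lt_two_pow_lvl_le {j : ℕ} (hj : 1 ≤ j) :
    M.μ {ω | j ^ 3 < 2 ^ M.lvl j ω} ≤ ENNReal.ofReal ((j : ℝ) ^ 2)⁻¹ := by
  have hj0 : (j : ℝ≥0∞) ≠ 0 := by exact_mod_cast (by omega : j ≠ 0)
  calc M.μ {ω | j ^ 3 < 2 ^ M.lvl j ω}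
      ≤ M.μ {ω | (j : ℝ≥0∞) ^ 3 ≤ 2 ^ M.lvl j ω} :=
        measure_mono fun ω (hω : j ^ 3 < 2 ^ M.lvl j ω) => by
          show (j : ℝ≥0∞) ^ 3 ≤ 2 ^ M.lvl j ω
          exact_mod_cast hω.le
    _ ≤ (∫⁻ ω, 2 ^ M.lvl j ω ∂M.μ) / j ^ 3 :=
        meas_ge_le_lintegral_div (M.measurable_two_pow_lvl hj).aemeasurable
          (pow_ne_zero _ hj0) (by simp)
    _ ≤ j / j ^ 3 := by gcongr; exact M.lintegral_two_pow_lvl_le j hj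
    _ = ENNReal.ofReal ((j : ℝ) ^ 2)⁻¹ := by
        rw [ENNReal.ofReal_inv_of_pos (by positivity), ENNReal.ofReal_pow (by positivity),
          ENNReal.ofReal_natCast, ENNReal.div_eq_inv_mul, pow_succ', ENNReal.mul_inv (by simp)
          (by simp), mul_comm (j : ℝ≥0∞)⁻¹, mul_assoc, ENNReal.inv_mul_cancel hj0 (by simp),
          mul_one]

lemma measureReal_le_abs_D_le {j : ℕ} (hj : 2 ≤ j) (k : Fin d) :
    M.μ.real {ω | (j : ℝ) ^ (-(α / 2)) ≤ |M.D j ω k|} ≤ 2 * exp (-(1 / 2) * (j : ℝ) ^ α) := by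
  have hj0 : (0 : ℝ) < j := by positivity
  refine ((hasSubgaussianMGF_of_map_eq_gaussianReal (M.D_gauss j hj k)).measureReal_le_abs_le
    (by positivity)).trans_eq ?_
  have hsq : ((j : ℝ) ^ (-(α / 2))) ^ 2 = (j : ℝ) ^ α * (j : ℝ) ^ (-(2 * α)) := by
    rw [← Real.rpow_natCast, ← Real.rpow_mul hj0.le, ← Real.rpow_add hj0]
    ring_nf
  have hvar : (((j : ℝ≥0) ^ (-(2 * α)) : ℝ≥0) : ℝ) = (j : ℝ) ^ (-(2 * α)) := by
    simp [NNReal.coe_rpow]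
  rw [hsq, hvar]
  have : (0 : ℝ) < (j : ℝ) ^ (-(2 * α)) := by positivity
  field_simp

def badEvent (j : ℕ) : Set M.Ω :=
  {ω | ∃ k, (j : ℝ) ^ (-(α / 2)) ≤ |M.D j ω k|} ∪ {ω | j ^ 3 < 2 ^ M.lvl j ω}

lemma measure_badEvent_le {j : ℕ} (hj : 2 ≤ j) :
    M.μ (M.badEvent j)
      ≤ ENNReal.ofReal (d * (2 * exp (-(1 / 2) * (j : ℝ) ^ α)) + ((j : ℝ) ^ 2)⁻¹) := by
  rw [ENNReal.ofReal_add (by positivity) (by positivity)]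
  refine (measure_union_le _ _).trans (add_le_add ?_ (M.measure_lt_two_pow_lvl_le (by omega)))
  rw [show {ω | ∃ k, (j : ℝ) ^ (-(α / 2)) ≤ |M.D j ω k|}
      = ⋃ k, {ω | (j : ℝ) ^ (-(α / 2)) ≤ |M.D j ω k|} by ext; simp]
  refine (measure_iUnion_fintype_le _ _).trans ?_
  calc ∑ k, M.μ {ω | (j : ℝ) ^ (-(α / 2)) ≤ |M.D j ω k|}
      ≤ ∑ _k : Fin d, ENNReal.ofReal (2 * exp (-(1 / 2) * (j : ℝ) ^ α)) :=
        Finset.sum_le_sum fun k _ => by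
          rw [← ofReal_measureReal]
          exact ENNReal.ofReal_le_ofReal (M.measureReal_le_abs_D_le hj k)
    _ = ENNReal.ofReal (d * (2 * exp (-(1 / 2) * (j : ℝ) ^ α))) := by
        rw [Finset.sum_const, Finset.card_univ, Fintype.card_fin, nsmul_eq_mul,
          ENNReal.ofReal_mul (Nat.cast_nonneg _), ENNReal.ofReal_natCast]

lemma tsum_measure_badEvent_ne_top (hα : 0 < α) : ∑' j, M.μ (M.badEvent j) ≠ ∞ := by
  have hb : Summable fun n : ℕ =>
      d * (2 * exp (-(1 / 2) * ((n + 2 : ℕ) : ℝ) ^ α)) + (((n + 2 : ℕ) : ℝ) ^ 2)⁻¹ :=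
    ((((summable_nat_add_iff (f := fun n : ℕ => exp (-(1 / 2) * (n : ℝ) ^ α)) 2).mpr
      (summable_exp_neg_mul_rpow_natCast hα (by norm_num))).mul_left 2).mul_left (d : ℝ)).add
      ((summable_nat_add_iff (f := fun n : ℕ => ((n : ℝ) ^ 2)⁻¹) 2).mpr
        (Real.summable_nat_pow_inv.mpr one_lt_two))
  rw [← Summable.sum_add_tsum_nat_add' (f := fun j => M.μ (M.badEvent j)) (k := 2)
    ENNReal.summable]
  refine ENNReal.add_ne_top.2 ⟨ENNReal.sum_ne_top.2 fun _ _ => measure_ne_top _ _, ?_⟩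
  refine ne_top_of_le_ne_top ENNReal.ofReal_ne_top
    ((ENNReal.tsum_le_tsum fun n => M.measure_badEvent_le (by omega)).trans_eq
      (ENNReal.ofReal_tsum_of_nonneg (fun n => by positivity) hb).symm)

lemma norm_D_le_of_notMem_badEvent (hα : 0 ≤ α) {j : ℕ} {ω : M.Ω} (h : ω ∉ M.badEvent j) :
    ‖M.D j ω‖ ≤ √d * ((2 : ℝ) ^ (-(α / 6))) ^ M.lvl j ω := by
  simp only [badEvent, Set.mem_union, Set.mem_ofPred_eq, not_or, not_exists, not_le,
    not_lt] at h
  obtain ⟨hD, hlvl⟩ := h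
  have hlvl' : (2 : ℝ) ^ M.lvl j ω ≤ (j : ℝ) ^ 3 := by exact_mod_cast hlvl
  have hε : (j : ℝ) ^ (-(α / 2)) ≤ ((2 : ℝ) ^ (-(α / 6))) ^ M.lvl j ω :=
    calc (j : ℝ) ^ (-(α / 2)) = ((j : ℝ) ^ 3) ^ (-(α / 6)) := by
          rw [← Real.rpow_natCast, ← Real.rpow_mul (Nat.cast_nonneg j)]
          ring_nf
      _ ≤ ((2 : ℝ) ^ M.lvl j ω) ^ (-(α / 6)) :=
          Real.rpow_le_rpow_of_nonpos (by positivity) hlvl' (by linarith)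
      _ = ((2 : ℝ) ^ (-(α / 6))) ^ M.lvl j ω := (Real.rpow_pow_comm zero_le_two _ _).symm
  have := EuclideanSpace.norm_le_sqrt_card_mul (c := (j : ℝ) ^ (-(α / 2))) (by positivity)
    fun k => (hD k).le
  rw [Fintype.card_fin] at this
  exact this.trans (by gcongr)

end Model

theorem cluster_bounded_as_general (d : ℕ) (α : ℝ) (hα : 0 < α) (M : Model d α) :
    ∀ᵐ ω ∂M.μ,
      IsBounded {x : EuclideanSpace ℝ (Fin d) | ∃ i : ℕ, 1 ≤ i ∧ x = M.X i ω} ∧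
      IsBounded (convexHull ℝ {x : EuclideanSpace ℝ (Fin d) | ∃ i : ℕ, 1 ≤ i ∧ x = M.X i ω}) := by
  filter_upwards [ae_eventually_notMem (M.tsum_measure_badEvent_ne_top hα)] with ω hω
  obtain ⟨J, hJ⟩ := eventually_atTop.mp hω
  set ρ : ℝ := 2 ^ (-(α / 6))
  have hρ : ρ < 1 := Real.rpow_lt_one_of_one_lt_of_neg one_lt_two (by linarith)
  obtain ⟨B, hB⟩ : ∃ B, ∀ i < J + 2, ‖M.X i ω‖ ≤ B :=
    ⟨∑ i ∈ Finset.range (J + 2), ‖M.X i ω‖, fun i hi =>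
      Finset.single_le_sum (fun i _ => norm_nonneg (M.X i ω)) (Finset.mem_range.2 hi)⟩
  have hpath := le_add_sum_range_of_le_parent (x := fun i => ‖M.X i ω‖)
    (g := fun t => √d * ρ ^ t) (fun t => by positivity) (fun i hi => (M.pa_mem i (by omega) ω).2)
    (fun i hi => M.lvl_rec i (by omega) ω) (fun i hi => by
      rw [M.X_rec i (by omega) ω]
      exact (norm_add_le _ _).trans
        (add_le_add le_rfl (M.norm_D_le_of_notMem_badEvent hα.le (hJ i (by omega))))) hB
  have hg : Summable fun t => √d * ρ ^ t :=
    (summable_geometric_of_lt_one (by positivity) hρ).mul_left _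
  have hbdd : IsBounded {x : EuclideanSpace ℝ (Fin d) | ∃ i : ℕ, 1 ≤ i ∧ x = M.X i ω} :=
    isBounded_iff_forall_norm_le.2 ⟨B + ∑' t, √d * ρ ^ t, by
      rintro _ ⟨i, -, rfl⟩
      exact (hpath i).trans (add_le_add le_rfl (hg.sum_le_tsum _ fun t _ => by positivity))⟩
  exact ⟨hbdd, isBounded_convexHull.2 hbdd⟩

/-- For every `d ≥ 2` and `α > 0`, the infinite cluster `𝒳_∞` is almost surely a
bounded subset of `ℝ^d`, and hence its convex hull is almost surely bounded. -/
theorem cluster_bounded_as (d : ℕ) (hd : 2 ≤ d) (α : ℝ) (hα : 0 < α) (M : Model d α) :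
    ∀ᵐ ω ∂M.μ,
      IsBounded {x : EuclideanSpace ℝ (Fin d) | ∃ i : ℕ, 1 ≤ i ∧ x = M.X i ω} ∧
      IsBounded (convexHull ℝ {x : EuclideanSpace ℝ (Fin d) | ∃ i : ℕ, 1 ≤ i ∧ x = M.X i ω}) :=
  cluster_bounded_as_general d α hα M
end

section
/- In a random recursive tree on vertex set {1,…,m}, for every vertex i ≤ m and every positive integer t ≤ m, the level λ_m(i) of vertex i satisfies P(λ_m(i) > t) ≤ (1/t!) (∑_{j=1}^m 1/j)^t ≤ (e(1 + log m)/t)^t. -/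
/-!
If vertex `i` has level at least `t`, its first `t` ancestors form a chain `i > a₁ > ⋯ > a_t ≥ 1`
with `π(i) = a₁` and `π(aₖ) = aₖ₊₁`. By independence a fixed chain occurs with probability
`∏ₖ 1/(aₖ₋₁ - 1) ≤ ∏ₖ 1/aₖ` (with `a₀ = i`), so a union bound over chains gives at most the sum
of `∏_{a ∈ S} 1/a` over `t`-subsets `S` of `{1, …, i-1}`; each such product appears `t!` times in
the expansion of `(∑ⱼ 1/j)^t`. The second inequality is `H_m ≤ 1 + log m` together with
`t! ≥ (t/e)^t`.
-/

open scoped ENNReal NNReal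

/-- A random recursive tree on vertex set `{1, …, m}`: each vertex `i ∈ {2, …, m}`
attaches to a parent `pa i` chosen uniformly at random from `{1, …, i-1}`,
independently over `i`.  `lvl i` is the level of vertex `i`, i.e. the number of
edges on the path from `i` to the root `1`. -/
structure RRT (m : ℕ) where
  Ω : Type
  [mΩ : MeasurableSpace Ω]
  μ : MeasureTheory.Measure Ω
  prob : MeasureTheory.IsProbabilityMeasure μ
  pa : ℕ → Ω → ℕ
  meas_pa : ∀ i, Measurable (pa i)
  pa_mem : ∀ i, 2 ≤ i → i ≤ m → ∀ ω, 1 ≤ pa i ω ∧ pa i ω < i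
  pa_unif : ∀ i, 2 ≤ i → i ≤ m → ∀ j, 1 ≤ j → j < i →
    μ {ω | pa i ω = j} = (1 : ℝ≥0∞) / (i - 1 : ℕ)
  indep : ProbabilityTheory.iIndepFun (m := fun _ : ℕ => (inferInstance : MeasurableSpace ℕ)) pa μ
  lvl : ℕ → Ω → ℕ
  lvl_one : ∀ ω, lvl 1 ω = 0
  lvl_rec : ∀ i, 2 ≤ i → i ≤ m → ∀ ω, lvl i ω = lvl (pa i ω) ω + 1

open MeasureTheory ProbabilityTheory Real

open Finset
open scoped Nat

theorem factorial_mul_sum_prod_le_sum_pow {ι R : Type*} [CommSemiring R] [PartialOrder R]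
    [CanonicallyOrderedAdd R] {t : ℕ} (s : Finset ι) (x : ι → R) (F : Finset (Fin t → ι))
    (hF : ∀ f ∈ F, Function.Injective f ∧ ∀ k, f k ∈ s)
    (hrange : Set.InjOn Set.range (F : Set (Fin t → ι))) :
    (t ! : R) * ∑ f ∈ F, ∏ k, x (f k) ≤ (∑ j ∈ s, x j) ^ t := by
  classical
  set P : Finset ((Fin t → ι) × Equiv.Perm (Fin t)) := F ×ˢ univ
  have hcomp : Set.InjOn (fun p : (Fin t → ι) × Equiv.Perm (Fin t) => p.1 ∘ p.2) P := by
    rintro ⟨f, σ⟩ hfσ ⟨g, τ⟩ hgτ h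
    simp only [P, coe_product, coe_univ, Set.mem_prod, mem_coe, Set.mem_univ, and_true]
      at hfσ hgτ h
    have hfg : f = g := hrange hfσ hgτ <| by
      simpa only [σ.surjective.range_comp, τ.surjective.range_comp] using congrArg Set.range h
    subst hfg
    exact Prod.ext rfl (Equiv.ext fun k => (hF f hfσ).1 (congrFun h k))
  calc (t ! : R) * ∑ f ∈ F, ∏ k, x (f k)
      = ∑ p ∈ P, ∏ k, x (p.1 (p.2 k)) := by
        rw [sum_product, mul_sum]
        refine sum_congr rfl fun f _ => ?_
        simp only [Equiv.prod_comp _ fun k => x (f k)]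
        rw [sum_const, card_univ, Fintype.card_perm, Fintype.card_fin, nsmul_eq_mul]
    _ = ∑ g ∈ P.image (fun p => p.1 ∘ p.2), ∏ k, x (g k) :=
        (sum_image (f := fun g => ∏ k, x (g k)) hcomp).symm
    _ ≤ ∑ g ∈ Fintype.piFinset fun _ => s, ∏ k, x (g k) := by
        refine sum_le_sum_of_subset fun g hg => ?_
        obtain ⟨⟨f, σ⟩, hf, rfl⟩ := mem_image.1 hg
        exact Fintype.mem_piFinset.2 fun k => (hF f (mem_product.1 hf).1).2 (σ k)
    _ = (∑ j ∈ s, x j) ^ t := by rw [← prod_univ_sum, Fin.prod_const]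

theorem one_div_factorial_le_exp_one_div_pow (t : ℕ) : 1 / (t ! : ℝ) ≤ (exp 1 / t) ^ t := by
  rcases t.eq_zero_or_pos with rfl | ht
  · simp
  have ht' : (0 : ℝ) < t := by exact_mod_cast ht
  rw [div_pow, exp_one_pow, div_le_div_iff₀ (by positivity) (by positivity), one_mul,
    ← div_le_iff₀ (by positivity)]
  exact pow_div_factorial_le_exp _ ht'.le t

theorem sum_Icc_one_div_le_one_add_log (m : ℕ) :
    ∑ j ∈ Icc 1 m, (1 : ℝ) / j ≤ 1 + log m := by
  simpa [harmonic_eq_sum_Icc] using harmonic_le_one_add_log m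

namespace RRT

variable {m : ℕ} {R : RRT m}

theorem measure_forall_pa_eq {ι : Type*} [Fintype ι] {b a : ι → ℕ} (hb : Function.Injective b)
    (hbm : ∀ k, 2 ≤ b k ∧ b k ≤ m) (hab : ∀ k, 1 ≤ a k ∧ a k < b k) :
    R.μ {ω | ∀ k, R.pa (b k) ω = a k} = ∏ k, ((b k - 1 : ℕ) : ℝ≥0∞)⁻¹ := by
  have hind := (R.indep.precomp hb).measure_inter_preimage_eq_mul univ
    (sets := fun k => {a k}) fun k _ => measurableSet_singleton (a k)
  simp only [mem_univ, Set.iInter_true, Set.preimage, Set.mem_singleton_iff] at hind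
  rw [Set.ofPred_forall, hind]
  refine prod_congr rfl fun k _ => ?_
  rw [R.pa_unif _ (hbm k).1 (hbm k).2 _ (hab k).1 (hab k).2, one_div]

theorem two_le_of_lvl_pos {j : ℕ} {ω : R.Ω} (hj : 1 ≤ j) (h : 0 < R.lvl j ω) : 2 ≤ j := by
  by_contra! hj2
  obtain rfl : j = 1 := by omega
  simp [R.lvl_one] at h

variable (R) in
def ancestor (ω : R.Ω) (i k : ℕ) : ℕ := (fun j => R.pa j ω)^[k] i

theorem ancestor_succ (ω : R.Ω) (i k : ℕ) :
    R.ancestor ω i (k + 1) = R.pa (R.ancestor ω i k) ω :=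
  Function.iterate_succ_apply' _ k i

theorem ancestor_spec {ω : R.Ω} {i k : ℕ} (hi : 1 ≤ i) (him : i ≤ m) (hk : k ≤ R.lvl i ω) :
    1 ≤ R.ancestor ω i k ∧ R.ancestor ω i k ≤ i ∧
      R.lvl (R.ancestor ω i k) ω + k = R.lvl i ω := by
  induction k with
  | zero => exact ⟨hi, le_rfl, rfl⟩
  | succ k ih =>
    obtain ⟨h1, hle, hlvl⟩ := ih (by omega)
    have h2 := two_le_of_lvl_pos h1 (by omega : 0 < R.lvl (R.ancestor ω i k) ω)
    have hpa := R.pa_mem _ h2 (hle.trans him) ω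
    have hrec := R.lvl_rec _ h2 (hle.trans him) ω
    rw [ancestor_succ]
    exact ⟨hpa.1, by omega, by omega⟩

theorem ancestor_succ_lt {ω : R.Ω} {i k : ℕ} (hi : 1 ≤ i) (him : i ≤ m) (hk : k < R.lvl i ω) :
    R.ancestor ω i (k + 1) < R.ancestor ω i k := by
  obtain ⟨h1, hle, hlvl⟩ := ancestor_spec hi him hk.le
  have h2 := two_le_of_lvl_pos h1 (by omega : 0 < R.lvl (R.ancestor ω i k) ω)
  rw [ancestor_succ]
  exact (R.pa_mem _ h2 (hle.trans him) ω).2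

open Classical in
/-- The sequences `f 0 > ⋯ > f (t-1) ≥ 1` below `i`: candidates for the first `t` proper ancestors
of `i`. -/
noncomputable def ancestorCandidates (i t : ℕ) : Finset (Fin t → ℕ) :=
  (Fintype.piFinset fun _ => Ico 1 i).filter fun f => StrictAnti (Fin.cons i f : Fin (t + 1) → ℕ)

variable (R) in
def ancestryEvent (i : ℕ) {t : ℕ} (f : Fin t → ℕ) : Set R.Ω :=
  {ω | ∀ k : Fin t, R.pa ((Fin.cons i f : Fin (t + 1) → ℕ) k.castSucc) ω = f k}

theorem strictAnti_of_mem_ancestorCandidates {i t : ℕ} {f : Fin t → ℕ}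
    (hf : f ∈ ancestorCandidates i t) : StrictAnti f := fun a b hab => by
  simpa using (mem_filter.1 hf).2 (Fin.succ_lt_succ_iff.2 hab)

theorem setOf_le_lvl_subset_iUnion_ancestryEvent {i : ℕ} (hi : 1 ≤ i) (him : i ≤ m) (t : ℕ) :
    {ω | t ≤ R.lvl i ω} ⊆ ⋃ f ∈ ancestorCandidates i t, R.ancestryEvent i f := by
  intro ω hω
  set q : Fin (t + 1) → ℕ := fun k => R.ancestor ω i k
  have hq : Fin.cons i (Fin.tail q) = q := Fin.cons_self_tail q
  have hanti : StrictAnti q := Fin.strictAnti_iff_succ_lt.2 fun k =>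
    ancestor_succ_lt hi him (k.isLt.trans_le hω)
  refine Set.mem_biUnion (x := Fin.tail q) (mem_filter.2 ⟨?_, hq ▸ hanti⟩) fun k => ?_
  · exact Fintype.mem_piFinset.2 fun k => mem_Ico.2
      ⟨(ancestor_spec hi him ((k.succ.is_le).trans hω)).1, hanti (Fin.succ_pos k)⟩
  · rw [hq]
    exact (ancestor_succ ω i k).symm

theorem measure_ancestryEvent_le {i t : ℕ} (him : i ≤ m) {f : Fin t → ℕ}
    (hf : f ∈ ancestorCandidates i t) :
    R.μ (R.ancestryEvent i f) ≤ ∏ k, (f k : ℝ≥0∞)⁻¹ := by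
  obtain ⟨hmem, hanti⟩ := mem_filter.1 hf
  set b : Fin t → ℕ := fun k => (Fin.cons i f : Fin (t + 1) → ℕ) k.castSucc
  have hf1 k : 1 ≤ f k := (mem_Ico.1 (Fintype.mem_piFinset.1 hmem k)).1
  have hfb k : f k < b k := by simpa using Fin.strictAnti_iff_succ_lt.1 hanti k
  have hbi k : b k ≤ i := by simpa using hanti.antitone (Fin.zero_le k.castSucc)
  calc R.μ (R.ancestryEvent i f) = ∏ k, ((b k - 1 : ℕ) : ℝ≥0∞)⁻¹ :=
        measure_forall_pa_eq (hanti.injective.comp (Fin.castSucc_injective t))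
          (fun k => ⟨(hf1 k).trans_lt (hfb k), (hbi k).trans him⟩) fun k => ⟨hf1 k, hfb k⟩
    _ ≤ ∏ k, (f k : ℝ≥0∞)⁻¹ :=
        prod_le_prod' fun k _ =>
          ENNReal.inv_le_inv.2 (Nat.cast_le.2 (Nat.le_sub_one_of_lt (hfb k)))

theorem measure_setOf_le_lvl_le {i : ℕ} (hi : 1 ≤ i) (him : i ≤ m) (t : ℕ) :
    R.μ {ω | t ≤ R.lvl i ω} ≤ (t ! : ℝ≥0∞)⁻¹ * (∑ j ∈ Ico 1 i, (j : ℝ≥0∞)⁻¹) ^ t := by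
  calc R.μ {ω | t ≤ R.lvl i ω}
      ≤ ∑ f ∈ ancestorCandidates i t, R.μ (R.ancestryEvent i f) :=
        (measure_mono (setOf_le_lvl_subset_iUnion_ancestryEvent hi him t)).trans
          (measure_biUnion_finset_le _ _)
    _ ≤ ∑ f ∈ ancestorCandidates i t, ∏ k, (f k : ℝ≥0∞)⁻¹ :=
        sum_le_sum fun f hf => measure_ancestryEvent_le him hf
    _ ≤ _ := by
        have hfact : (t ! : ℝ≥0∞) ≠ 0 := by exact_mod_cast t.factorial_ne_zero
        refine (ENNReal.mul_le_iff_le_inv hfact (ENNReal.natCast_ne_top _)).1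
          (factorial_mul_sum_prod_le_sum_pow (R := ℝ≥0∞) _ _ _ (fun f hf => ⟨?_, ?_⟩) ?_)
        · exact (strictAnti_of_mem_ancestorCandidates hf).injective
        · exact fun k => Fintype.mem_piFinset.1 (mem_filter.1 hf).1 k
        · exact Set.range_injOn_strictAnti.mono fun f hf =>
            strictAnti_of_mem_ancestorCandidates (mem_coe.1 hf)

end RRT

theorem rrt_level_tail_general (m : ℕ) (R : RRT m) (i t : ℕ)
    (hi1 : 1 ≤ i) (him : i ≤ m) :
    R.μ {ω | t < R.lvl i ω} ≤
        ENNReal.ofReal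
          ((1 / (Nat.factorial t : ℝ)) * (∑ j ∈ Finset.Icc 1 m, (1 : ℝ) / j) ^ t) ∧
      (1 / (Nat.factorial t : ℝ)) * (∑ j ∈ Finset.Icc 1 m, (1 : ℝ) / j) ^ t ≤
        (Real.exp 1 * (1 + Real.log m) / t) ^ t := by
  have hH : ENNReal.ofReal (∑ j ∈ Icc 1 m, (1 : ℝ) / j) = ∑ j ∈ Icc 1 m, (j : ℝ≥0∞)⁻¹ := by
    rw [ENNReal.ofReal_sum_of_nonneg fun j _ => by positivity]
    refine sum_congr rfl fun j hj => ?_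
    rw [one_div, ENNReal.ofReal_inv_of_pos (by exact_mod_cast (mem_Icc.1 hj).1),
      ENNReal.ofReal_natCast]
  refine ⟨?_, ?_⟩
  · calc R.μ {ω | t < R.lvl i ω}
        ≤ R.μ {ω | t ≤ R.lvl i ω} := measure_mono (Set.ofPred_subset_ofPred.2 fun _ => le_of_lt)
      _ ≤ (t ! : ℝ≥0∞)⁻¹ * (∑ j ∈ Ico 1 i, (j : ℝ≥0∞)⁻¹) ^ t := R.measure_setOf_le_lvl_le hi1 him t
      _ ≤ (t ! : ℝ≥0∞)⁻¹ * (∑ j ∈ Icc 1 m, (j : ℝ≥0∞)⁻¹) ^ t := by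
          gcongr
          exact Ico_subset_Icc_self.trans (Icc_subset_Icc_right (by omega))
      _ = _ := by
          rw [ENNReal.ofReal_mul (by positivity), ENNReal.ofReal_pow (by positivity), hH, one_div,
            ENNReal.ofReal_inv_of_pos (by positivity), ENNReal.ofReal_natCast]
  · calc (1 / (t ! : ℝ)) * (∑ j ∈ Icc 1 m, (1 : ℝ) / j) ^ t
        ≤ (exp 1 / t) ^ t * (1 + log m) ^ t := by
          gcongr
          exacts [one_div_factorial_le_exp_one_div_pow t, sum_Icc_one_div_le_one_add_log m]
      _ = (exp 1 * (1 + log m) / t) ^ t := by rw [← mul_pow, div_mul_eq_mul_div]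

/-- In a random recursive tree on `{1, …, m}`, for every vertex `i ≤ m` and every
positive integer `t ≤ m`, the level of `i` satisfies
`P(λ_m(i) > t) ≤ (1/t!) (∑_{j=1}^m 1/j)^t ≤ (e (1 + log m) / t)^t`. -/
theorem rrt_level_tail (m : ℕ) (R : RRT m) (i t : ℕ)
    (hi1 : 1 ≤ i) (him : i ≤ m) (ht1 : 1 ≤ t) (htm : t ≤ m) :
    R.μ {ω | t < R.lvl i ω} ≤
        ENNReal.ofReal
          ((1 / (Nat.factorial t : ℝ)) * (∑ j ∈ Finset.Icc 1 m, (1 : ℝ) / j) ^ t) ∧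
      (1 / (Nat.factorial t : ℝ)) * (∑ j ∈ Finset.Icc 1 m, (1 : ℝ) / j) ^ t ≤
        (Real.exp 1 * (1 + Real.log m) / t) ^ t :=
  rrt_level_tail_general m R i t hi1 him
end
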